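/- Let T be a transformation of a nonempty set X, let 𝒦 be a T-invariant set of gambles on X (f ∈ 𝒦 implies f∘T ∈ 𝒦), and let L : 𝒦 → ℝ be a lower prevision that avoids sure loss and is weakly T-invariant (L(f∘T) ≥ L(f) for all f ∈ 𝒦). Then there exist strongly T-invariant coherent lower previsions on all gambles on X that dominate L on 𝒦, and the point-wise smallest such lower prevision E_{L,T} is given by E_{L,T}(f) = lim_{n→∞} E_L( (1/n) Σ_{k=0}^{n−1} f∘T^k ) = sup_{n≥1} E_L( (1/n) Σ_{k=0}^{n−1} f∘T^k ) for every gamble f (in particular, this limit exists), where E_L is the natural extension of L and T^k denotes the k-fold composition of T. -/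

import Mathlib

def IsGamble {X : Type*} (f : X → ℝ) : Prop :=
  BddAbove (Set.range f) ∧ BddBelow (Set.range f)

def IsCoherentLowerPrevision {X : Type*} (L : (X → ℝ) → ℝ) : Prop :=
  (∀ f : X → ℝ, IsGamble f → sInf (Set.range f) ≤ L f) ∧
  (∀ f g : X → ℝ, IsGamble f → IsGamble g → L f + L g ≤ L (f + g)) ∧
  (∀ f : X → ℝ, IsGamble f → ∀ c : ℝ, 0 ≤ c → L (c • f) = c * L f)

def IsCoherentPrevision {X : Type*} (P : (X → ℝ) → ℝ) : Prop :=
  (∀ f g : X → ℝ, IsGamble f → IsGamble g → P (f + g) = P f + P g) ∧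
  (∀ f : X → ℝ, IsGamble f → sInf (Set.range f) ≤ P f)

def IsTransformationMonoid {X : Type*} (𝒯 : Set (X → X)) : Prop :=
  id ∈ 𝒯 ∧ ∀ S ∈ 𝒯, ∀ T ∈ 𝒯, S ∘ T ∈ 𝒯

def Dominating {X : Type*} (L : (X → ℝ) → ℝ) : Set ((X → ℝ) → ℝ) :=
  {P | IsCoherentPrevision P ∧ ∀ f : X → ℝ, IsGamble f → L f ≤ P f}

def AvoidsSureLoss {X : Type*} (𝒦 : Set (X → ℝ)) (L : (X → ℝ) → ℝ) : Prop :=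
  ∀ (n : ℕ) (lam : Fin n → ℝ) (fs : Fin n → X → ℝ),
    (∀ k, 0 ≤ lam k) → (∀ k, fs k ∈ 𝒦) →
    0 ≤ ⨆ x : X, ∑ k, lam k * (fs k x - L (fs k))

noncomputable def NatExt {X : Type*} (𝒦 : Set (X → ℝ)) (L : (X → ℝ) → ℝ)
    (g : X → ℝ) : ℝ :=
  sSup {α : ℝ | ∃ (n : ℕ) (lam : Fin n → ℝ) (fs : Fin n → X → ℝ),
    (∀ k, 0 ≤ lam k) ∧ (∀ k, fs k ∈ 𝒦) ∧
    α = ⨅ x : X, (g x - ∑ k, lam k * (fs k x - L (fs k)))}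

/-!
The natural extension `E_L = NatExt 𝒦 L` is the smallest coherent lower prevision dominating
`L`, and weak invariance of `L` makes it weakly invariant: `E_L g ≤ E_L (g ∘ T)`. Hence the values
of `E_L` on the Birkhoff sums `S_m f` form a superadditive sequence, and by Fekete's lemma
`E_L (S_m f) / m` converges to its supremum; this limit is `E_{L,T} f = invariantNatExt 𝒦 L T f`.
It inherits coherence from `E_L`, it is strongly invariant because the Birkhoff sums of
`f - f ∘ T` are bounded, and it lies below every strongly invariant coherent `M ≥ L`, since such
an `M` dominates `E_L` and does not increase under Birkhoff averaging.
-/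
open Set Filter Topology

theorem tendsto_ciSup_of_superadditive {u : ℕ → ℝ} (hu : ∀ m n, u m + u n ≤ u (m + n))
    (hbdd : BddAbove (range fun n : ℕ => u (n + 1) / (n + 1 : ℕ))) :
    Tendsto (fun n : ℕ => u (n + 1) / (n + 1 : ℕ)) atTop
      (𝓝 (⨆ n : ℕ, u (n + 1) / (n + 1 : ℕ))) := by
  have hsub : Subadditive (-u) := fun m n => by
    simpa only [Pi.neg_apply, neg_add] using neg_le_neg (hu m n)
  obtain ⟨C, hC⟩ := hbdd
  have hbdd' : BddBelow (range fun n : ℕ => (-u) n / n) := by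
    refine ⟨min (-C) 0, ?_⟩
    rintro _ ⟨_ | n, rfl⟩
    · simp
    · simpa [neg_div] using Or.inl (hC ⟨n, rfl⟩)
  have hlim : Tendsto (fun n : ℕ => u (n + 1) / (n + 1 : ℕ)) atTop (𝓝 (-hsub.lim)) :=
    ((hsub.tendsto_lim hbdd').neg.comp (tendsto_add_atTop_nat 1)).congr fun n => by
      simp [neg_div]
  have hle : ∀ n : ℕ, u (n + 1) / (n + 1 : ℕ) ≤ -hsub.lim := fun n => by
    have := hsub.lim_le_div hbdd' n.succ_ne_zero
    rw [Pi.neg_apply, neg_div] at this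
    linarith
  rwa [le_antisymm (ciSup_le hle) (le_of_tendsto' hlim fun n => le_ciSup ⟨C, hC⟩ n)]

section Birkhoff

variable {X : Type*}

lemma birkhoffSum_eq_sum_comp (T : X → X) (f : X → ℝ) (n : ℕ) :
    birkhoffSum T f n = ∑ k ∈ Finset.range n, f ∘ T^[k] := by
  ext x
  simp [birkhoffSum]

lemma birkhoffAverage_smul (T : X → X) (f : X → ℝ) (c : ℝ) (n : ℕ) :
    birkhoffAverage ℝ T (c • f) n = c • birkhoffAverage ℝ T f n := by
  ext x
  simp [birkhoffAverage, birkhoffSum, Finset.mul_sum, mul_left_comm]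

lemma birkhoffSum_comp_sub (T : X → X) (f : X → ℝ) (n : ℕ) (x : X) :
    birkhoffSum T (f ∘ T - f) n x = f (T^[n] x) - f x := by
  rw [birkhoffSum_sub, ← birkhoffSum_apply_sub_birkhoffSum]
  congr 1
  simp only [birkhoffSum, Function.comp_apply, ← Function.iterate_succ_apply' T,
    Function.iterate_succ_apply]

lemma birkhoffSum_sub_comp (T : X → X) (f : X → ℝ) (n : ℕ) (x : X) :
    birkhoffSum T (f - f ∘ T) n x = f x - f (T^[n] x) := by
  rw [← neg_sub, birkhoffSum_neg, birkhoffSum_comp_sub, neg_sub]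

lemma sum_range_succ_div_eq_birkhoffAverage (T : X → X) (f : X → ℝ) (n : ℕ) (x : X) :
    (∑ k ∈ Finset.range (n + 1), f (T^[k] x)) / ((n : ℝ) + 1) =
      birkhoffAverage ℝ T f (n + 1) x := by
  simp [birkhoffAverage, birkhoffSum, div_eq_inv_mul]

end Birkhoff

section Gamble

variable {X : Type*} {f g : X → ℝ}

lemma IsGamble.le_sSup (hf : IsGamble f) (x : X) : f x ≤ sSup (range f) :=
  le_csSup hf.1 ⟨x, rfl⟩

lemma IsGamble.sInf_le (hf : IsGamble f) (x : X) : sInf (range f) ≤ f x :=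
  csInf_le hf.2 ⟨x, rfl⟩

lemma isGamble_const (c : ℝ) : IsGamble fun _ : X => c :=
  ⟨⟨c, by rintro _ ⟨_, rfl⟩; rfl⟩, ⟨c, by rintro _ ⟨_, rfl⟩; rfl⟩⟩

lemma IsGamble.add (hf : IsGamble f) (hg : IsGamble g) : IsGamble (f + g) :=
  ⟨hf.1.range_add hg.1, hf.2.range_add hg.2⟩

lemma IsGamble.neg (hf : IsGamble f) : IsGamble (-f) :=
  ⟨hf.2.range_neg, hf.1.range_neg⟩

lemma IsGamble.sub (hf : IsGamble f) (hg : IsGamble g) : IsGamble (f - g) :=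
  sub_eq_add_neg f g ▸ hf.add hg.neg

lemma IsGamble.smul (hf : IsGamble f) (c : ℝ) : IsGamble (c • f) := by
  have h := (isBounded_iff_bddBelow_bddAbove.2 ⟨hf.2, hf.1⟩).smul₀ c
  rw [smul_set_range] at h
  exact (isBounded_iff_bddBelow_bddAbove.1 h).symm

lemma IsGamble.comp (hf : IsGamble f) (T : X → X) : IsGamble (f ∘ T) :=
  ⟨hf.1.mono (range_comp_subset_range T f), hf.2.mono (range_comp_subset_range T f)⟩

lemma isGamble_sum {ι : Type*} (s : Finset ι) {g : ι → X → ℝ}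
    (hg : ∀ i ∈ s, IsGamble (g i)) : IsGamble (∑ i ∈ s, g i) :=
  Finset.sum_induction g IsGamble (fun _ _ => IsGamble.add) (isGamble_const 0) hg

lemma IsGamble.birkhoffSum (hf : IsGamble f) (T : X → X) (n : ℕ) :
    IsGamble (_root_.birkhoffSum T f n) :=
  birkhoffSum_eq_sum_comp T f n ▸ isGamble_sum (Finset.range n) fun k _ => hf.comp T^[k]

lemma IsGamble.birkhoffAverage (hf : IsGamble f) (T : X → X) (n : ℕ) :
    IsGamble (_root_.birkhoffAverage ℝ T f n) :=
  (hf.birkhoffSum T n).smul _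

lemma IsGamble.birkhoffAverage_le (hf : IsGamble f) (T : X → X) {n : ℕ} (hn : n ≠ 0) (x : X) :
    _root_.birkhoffAverage ℝ T f n x ≤ sSup (range f) := by
  have hsum : _root_.birkhoffSum T f n x ≤ n * sSup (range f) := by
    simpa [_root_.birkhoffSum] using
      Finset.sum_le_card_nsmul (Finset.range n) _ _ fun k _ => hf.le_sSup (T^[k] x)
  rw [_root_.birkhoffAverage, smul_eq_mul, inv_mul_le_iff₀ (by positivity)]
  exact hsum

end Gamble

def IsStronglyInvariant {X : Type*} (T : X → X) (M : (X → ℝ) → ℝ) : Prop :=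
  ∀ f : X → ℝ, IsGamble f → 0 ≤ M (f - f ∘ T) ∧ 0 ≤ M (f ∘ T - f)

namespace IsCoherentLowerPrevision

variable {X : Type*} {M : (X → ℝ) → ℝ} {f g : X → ℝ}

lemma map_zero (hM : IsCoherentLowerPrevision M) : M 0 = 0 := by
  simpa using hM.2.2 0 (isGamble_const 0) 0 le_rfl

lemma le_of_forall_le [Nonempty X] (hM : IsCoherentLowerPrevision M) (hf : IsGamble f) {c : ℝ}
    (h : ∀ x, c ≤ f x) : c ≤ M f :=
  (le_csInf (range_nonempty f) (by rintro _ ⟨x, rfl⟩; exact h x)).trans (hM.1 f hf)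

lemma le_of_nonneg_sub (hM : IsCoherentLowerPrevision M) (hf : IsGamble f) (hg : IsGamble g)
    (h : 0 ≤ M (f - g)) : M g ≤ M f := by
  have := hM.2.1 g (f - g) hg (hf.sub hg)
  rw [add_sub_cancel] at this
  linarith

lemma sum_le (hM : IsCoherentLowerPrevision M) {ι : Type*} (s : Finset ι) {g : ι → X → ℝ}
    (hg : ∀ i ∈ s, IsGamble (g i)) : ∑ i ∈ s, M (g i) ≤ M (∑ i ∈ s, g i) := by
  classical
  induction s using Finset.induction_on with
  | empty => simp [hM.map_zero]
  | insert a s ha ih =>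
    rw [Finset.sum_insert ha, Finset.sum_insert ha]
    have hs := Finset.forall_mem_insert .. |>.1 hg
    exact (add_le_add le_rfl (ih hs.2)).trans (hM.2.1 _ _ hs.1 (isGamble_sum s hs.2))

lemma nonneg_sub_comp_iterate (hM : IsCoherentLowerPrevision M) {T : X → X}
    (hT : IsStronglyInvariant T M) (hf : IsGamble f) (k : ℕ) : 0 ≤ M (f - f ∘ T^[k]) := by
  induction k with
  | zero => simp [hM.map_zero]
  | succ k ih =>
    have hsplit : f - f ∘ T^[k + 1] = (f - f ∘ T^[k]) + (f ∘ T^[k] - (f ∘ T^[k]) ∘ T) := by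
      rw [Function.iterate_succ, Function.comp_assoc]
      abel
    rw [hsplit]
    exact (add_nonneg ih (hT _ (hf.comp _)).1).trans
      (hM.2.1 _ _ (hf.sub (hf.comp _)) ((hf.comp _).sub (hf.comp _ |>.comp _)))

lemma map_birkhoffAverage_le (hM : IsCoherentLowerPrevision M) {T : X → X}
    (hT : IsStronglyInvariant T M) (hf : IsGamble f) {n : ℕ} (hn : n ≠ 0) :
    M (birkhoffAverage ℝ T f n) ≤ M f := by
  have hdiff :
      f - birkhoffAverage ℝ T f n = (n : ℝ)⁻¹ • ∑ k ∈ Finset.range n, (f - f ∘ T^[k]) := by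
    rw [Finset.sum_sub_distrib, ← birkhoffSum_eq_sum_comp, Finset.sum_const, Finset.card_range,
      smul_sub, ← Nat.cast_smul_eq_nsmul ℝ, inv_smul_smul₀ (Nat.cast_ne_zero.2 hn)]
    rfl
  have hterms : ∀ k ∈ Finset.range n, IsGamble (f - f ∘ T^[k]) := fun k _ => hf.sub (hf.comp _)
  refine hM.le_of_nonneg_sub hf (hf.birkhoffAverage T n) ?_
  rw [hdiff, hM.2.2 _ (isGamble_sum _ hterms) _ (by positivity)]
  exact mul_nonneg (by positivity) ((Finset.sum_nonneg fun k _ =>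
    hM.nonneg_sub_comp_iterate hT hf k).trans (hM.sum_le _ hterms))

end IsCoherentLowerPrevision

section NaturalExtension

variable {X : Type*} {𝒦 : Set (X → ℝ)} {L : (X → ℝ) → ℝ} {g : X → ℝ}
  {n : ℕ} {lam : Fin n → ℝ} {fs : Fin n → X → ℝ}

def marginalGain (L : (X → ℝ) → ℝ) (lam : Fin n → ℝ) (fs : Fin n → X → ℝ) (x : X) : ℝ :=
  ∑ k, lam k * (fs k x - L (fs k))

lemma isGamble_marginalGain (h𝒦g : ∀ f ∈ 𝒦, IsGamble f) (hfs : ∀ k, fs k ∈ 𝒦) :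
    IsGamble (marginalGain L lam fs) := by
  convert isGamble_sum Finset.univ fun k _ =>
    ((h𝒦g _ (hfs k)).sub (isGamble_const (L (fs k)))).smul (lam k) using 1
  ext x
  simp [marginalGain]

lemma marginalGain_smul (c : ℝ) (x : X) :
    marginalGain L (c • lam) fs x = c * marginalGain L lam fs x := by
  simp [marginalGain, Finset.mul_sum, mul_assoc]

lemma marginalGain_append {m : ℕ} {lam' : Fin m → ℝ} {fs' : Fin m → X → ℝ} (x : X) :
    marginalGain L (Fin.append lam lam') (Fin.append fs fs') x =
      marginalGain L lam fs x + marginalGain L lam' fs' x := by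
  simp [marginalGain, Fin.sum_univ_add]

lemma AvoidsSureLoss.le_of_forall_add_marginalGain_le [Nonempty X] (hasl : AvoidsSureLoss 𝒦 L)
    (hlam : ∀ k, 0 ≤ lam k) (hfs : ∀ k, fs k ∈ 𝒦) {α c : ℝ}
    (h : ∀ x, α + marginalGain L lam fs x ≤ c) : α ≤ c := by
  have := (hasl n lam fs hlam hfs).trans (ciSup_le fun x => le_sub_iff_add_le'.2 (h x))
  linarith

lemma iInf_sub_marginalGain_add_le (h𝒦g : ∀ f ∈ 𝒦, IsGamble f) (hg : IsGamble g)
    (hfs : ∀ k, fs k ∈ 𝒦) (x : X) :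
    (⨅ y, (g y - marginalGain L lam fs y)) + marginalGain L lam fs x ≤ g x :=
  le_sub_iff_add_le.1 (ciInf_le (hg.sub (isGamble_marginalGain h𝒦g hfs)).2 x)

lemma natExt_le (h𝒦g : ∀ f ∈ 𝒦, IsGamble f) (hg : IsGamble g) {β : ℝ}
    (h : ∀ (n : ℕ) (lam : Fin n → ℝ) (fs : Fin n → X → ℝ), (∀ k, 0 ≤ lam k) → (∀ k, fs k ∈ 𝒦) →
      ∀ α, (∀ x, α + marginalGain L lam fs x ≤ g x) → α ≤ β) :
    NatExt 𝒦 L g ≤ β := by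
  refine csSup_le ⟨_, 0, Fin.elim0, Fin.elim0, fun k => k.elim0, fun k => k.elim0, rfl⟩ ?_
  rintro _ ⟨n, lam, fs, hlam, hfs, rfl⟩
  exact h n lam fs hlam hfs _ (iInf_sub_marginalGain_add_le h𝒦g hg hfs)

lemma le_natExt [Nonempty X] (h𝒦g : ∀ f ∈ 𝒦, IsGamble f) (hasl : AvoidsSureLoss 𝒦 L)
    (hg : IsGamble g) (hlam : ∀ k, 0 ≤ lam k) (hfs : ∀ k, fs k ∈ 𝒦) {α : ℝ}
    (h : ∀ x, α + marginalGain L lam fs x ≤ g x) : α ≤ NatExt 𝒦 L g := by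
  obtain ⟨c, hc⟩ := hg.1
  refine (le_ciInf fun x => le_sub_iff_add_le.2 (h x)).trans
    (le_csSup ⟨c, ?_⟩ ⟨n, lam, fs, hlam, hfs, rfl⟩)
  rintro _ ⟨m, lam', fs', hlam', hfs', rfl⟩
  exact hasl.le_of_forall_add_marginalGain_le hlam' hfs' fun x =>
    (iInf_sub_marginalGain_add_le h𝒦g hg hfs' x).trans (hc ⟨x, rfl⟩)

lemma le_natExt_of_forall_le [Nonempty X] (h𝒦g : ∀ f ∈ 𝒦, IsGamble f)
    (hasl : AvoidsSureLoss 𝒦 L) (hg : IsGamble g) {c : ℝ} (h : ∀ x, c ≤ g x) :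
    c ≤ NatExt 𝒦 L g :=
  le_natExt (lam := Fin.elim0) (fs := Fin.elim0) h𝒦g hasl hg (fun k => k.elim0)
    (fun k => k.elim0) fun x => by simpa [marginalGain] using h x

lemma natExt_le_of_forall_le [Nonempty X] (h𝒦g : ∀ f ∈ 𝒦, IsGamble f)
    (hasl : AvoidsSureLoss 𝒦 L) (hg : IsGamble g) {c : ℝ} (h : ∀ x, g x ≤ c) :
    NatExt 𝒦 L g ≤ c :=
  natExt_le h𝒦g hg fun _ _ _ hlam hfs _ hα =>
    hasl.le_of_forall_add_marginalGain_le hlam hfs fun x => (hα x).trans (h x)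

lemma le_natExt_of_mem [Nonempty X] (h𝒦g : ∀ f ∈ 𝒦, IsGamble f) (hasl : AvoidsSureLoss 𝒦 L)
    {f : X → ℝ} (hf : f ∈ 𝒦) : L f ≤ NatExt 𝒦 L f :=
  le_natExt (lam := fun _ : Fin 1 => 1) (fs := fun _ => f) h𝒦g hasl (h𝒦g f hf)
    (fun _ => zero_le_one) (fun _ => hf) fun x => by simp [marginalGain]

lemma le_natExt_add [Nonempty X] (h𝒦g : ∀ f ∈ 𝒦, IsGamble f) (hasl : AvoidsSureLoss 𝒦 L)
    {g₁ g₂ : X → ℝ} (hg₁ : IsGamble g₁) (hg₂ : IsGamble g₂) :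
    NatExt 𝒦 L g₁ + NatExt 𝒦 L g₂ ≤ NatExt 𝒦 L (g₁ + g₂) := by
  rw [← le_sub_iff_add_le]
  refine natExt_le h𝒦g hg₁ fun n₁ lam₁ fs₁ hlam₁ hfs₁ α₁ h₁ => ?_
  rw [le_sub_comm]
  refine natExt_le h𝒦g hg₂ fun n₂ lam₂ fs₂ hlam₂ hfs₂ α₂ h₂ => ?_
  rw [le_sub_iff_add_le']
  -- the concatenated assessments witness `α₁ + α₂` for `g₁ + g₂`
  refine le_natExt (lam := Fin.append lam₁ lam₂) (fs := Fin.append fs₁ fs₂) h𝒦g hasl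
    (hg₁.add hg₂) (fun k => ?_) (fun k => ?_) fun x => ?_
  · cases k using Fin.addCases <;> simp [hlam₁, hlam₂]
  · cases k using Fin.addCases <;> simp [hfs₁, hfs₂]
  · rw [marginalGain_append, Pi.add_apply]
    linarith [h₁ x, h₂ x]

lemma mul_natExt_le_natExt_smul [Nonempty X] (h𝒦g : ∀ f ∈ 𝒦, IsGamble f)
    (hasl : AvoidsSureLoss 𝒦 L) (hg : IsGamble g) {c : ℝ} (hc : 0 < c) :
    c * NatExt 𝒦 L g ≤ NatExt 𝒦 L (c • g) := by
  rw [← le_div_iff₀' hc]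
  refine natExt_le h𝒦g hg fun n lam fs hlam hfs α h => ?_
  rw [le_div_iff₀' hc]
  refine le_natExt (lam := c • lam) h𝒦g hasl (hg.smul c) (fun k => mul_nonneg hc.le (hlam k))
    hfs fun x => ?_
  rw [marginalGain_smul, ← mul_add]
  exact mul_le_mul_of_nonneg_left (h x) hc.le

lemma natExt_smul [Nonempty X] (h𝒦g : ∀ f ∈ 𝒦, IsGamble f) (hasl : AvoidsSureLoss 𝒦 L)
    (hg : IsGamble g) {c : ℝ} (hc : 0 ≤ c) : NatExt 𝒦 L (c • g) = c * NatExt 𝒦 L g := by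
  rcases hc.eq_or_lt with rfl | hc
  · have h0 : IsGamble (0 : X → ℝ) := isGamble_const 0
    rw [zero_smul, zero_mul]
    exact le_antisymm (natExt_le_of_forall_le h𝒦g hasl h0 fun _ => le_rfl)
      (le_natExt_of_forall_le h𝒦g hasl h0 fun _ => le_rfl)
  · refine le_antisymm ?_ (mul_natExt_le_natExt_smul h𝒦g hasl hg hc)
    have := mul_natExt_le_natExt_smul h𝒦g hasl (hg.smul c) (inv_pos.2 hc)
    rwa [inv_smul_smul₀ hc.ne', inv_mul_le_iff₀ hc] at this

lemma natExt_le_natExt_comp [Nonempty X] (h𝒦g : ∀ f ∈ 𝒦, IsGamble f)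
    (hasl : AvoidsSureLoss 𝒦 L) {T : X → X} (h𝒦T : ∀ f ∈ 𝒦, f ∘ T ∈ 𝒦)
    (hweak : ∀ f ∈ 𝒦, L f ≤ L (f ∘ T)) (hg : IsGamble g) :
    NatExt 𝒦 L g ≤ NatExt 𝒦 L (g ∘ T) := by
  refine natExt_le h𝒦g hg fun n lam fs hlam hfs α h => ?_
  refine le_natExt (fs := fun k => fs k ∘ T) h𝒦g hasl (hg.comp T) hlam (fun k => h𝒦T _ (hfs k))
    fun x => le_trans ?_ (h (T x))
  refine add_le_add le_rfl (Finset.sum_le_sum fun k _ => ?_)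
  exact mul_le_mul_of_nonneg_left (sub_le_sub_left (hweak _ (hfs k)) _) (hlam k)

lemma natExt_le_natExt_comp_iterate [Nonempty X] (h𝒦g : ∀ f ∈ 𝒦, IsGamble f)
    (hasl : AvoidsSureLoss 𝒦 L) {T : X → X} (h𝒦T : ∀ f ∈ 𝒦, f ∘ T ∈ 𝒦)
    (hweak : ∀ f ∈ 𝒦, L f ≤ L (f ∘ T)) (hg : IsGamble g) (m : ℕ) :
    NatExt 𝒦 L g ≤ NatExt 𝒦 L (g ∘ T^[m]) := by
  induction m with
  | zero => rfl
  | succ m ih =>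
    rw [Function.iterate_succ, ← Function.comp_assoc]
    exact ih.trans (natExt_le_natExt_comp h𝒦g hasl h𝒦T hweak (hg.comp _))

lemma IsCoherentLowerPrevision.nonneg_marginalGain {M : (X → ℝ) → ℝ}
    (hM : IsCoherentLowerPrevision M) [Nonempty X] (h𝒦g : ∀ f ∈ 𝒦, IsGamble f)
    (hdom : ∀ f ∈ 𝒦, L f ≤ M f) (hlam : ∀ k, 0 ≤ lam k) (hfs : ∀ k, fs k ∈ 𝒦) :
    0 ≤ M (marginalGain L lam fs) := by
  have hterm : ∀ k, IsGamble (fs k + fun _ => -L (fs k)) := fun k =>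
    (h𝒦g _ (hfs k)).add (isGamble_const _)
  have hsum : marginalGain L lam fs = ∑ k, lam k • (fs k + fun _ => -L (fs k)) := by
    ext x
    simp [marginalGain, sub_eq_add_neg, mul_add]
  rw [hsum]
  refine (Finset.sum_nonneg fun k _ => ?_).trans
    (hM.sum_le _ fun k _ => (hterm k).smul (lam k))
  rw [hM.2.2 _ (hterm k) _ (hlam k)]
  refine mul_nonneg (hlam k) ?_
  have hconst : -L (fs k) ≤ M fun _ => -L (fs k) :=
    hM.le_of_forall_le (isGamble_const _) fun _ => le_rfl
  linarith [hdom _ (hfs k), hM.2.1 _ _ (h𝒦g _ (hfs k)) (isGamble_const (-L (fs k)))]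

lemma IsCoherentLowerPrevision.natExt_le {M : (X → ℝ) → ℝ} (hM : IsCoherentLowerPrevision M)
    [Nonempty X] (h𝒦g : ∀ f ∈ 𝒦, IsGamble f) (hdom : ∀ f ∈ 𝒦, L f ≤ M f) (hg : IsGamble g) :
    NatExt 𝒦 L g ≤ M g := by
  refine _root_.natExt_le h𝒦g hg fun n lam fs hlam hfs α h => ?_
  have hgain := isGamble_marginalGain (L := L) (lam := lam) h𝒦g hfs
  calc α ≤ M (g - marginalGain L lam fs) :=
        hM.le_of_forall_le (hg.sub hgain) fun x => le_sub_iff_add_le.2 (h x)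
    _ ≤ M (g - marginalGain L lam fs) + M (marginalGain L lam fs) :=
        le_add_of_nonneg_right (hM.nonneg_marginalGain h𝒦g hdom hlam hfs)
    _ ≤ M g := by simpa using hM.2.1 _ _ (hg.sub hgain) hgain

end NaturalExtension

section InvariantNaturalExtension

variable {X : Type*} [Nonempty X] {𝒦 : Set (X → ℝ)} {L : (X → ℝ) → ℝ} {T : X → X}
  {f : X → ℝ}

noncomputable def invariantNatExt (𝒦 : Set (X → ℝ)) (L : (X → ℝ) → ℝ) (T : X → X)
    (f : X → ℝ) : ℝ :=
  ⨆ n : ℕ, NatExt 𝒦 L (birkhoffAverage ℝ T f (n + 1))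

lemma natExt_birkhoffAverage (h𝒦g : ∀ f ∈ 𝒦, IsGamble f) (hasl : AvoidsSureLoss 𝒦 L)
    (hf : IsGamble f) (n : ℕ) :
    NatExt 𝒦 L (birkhoffAverage ℝ T f n) = NatExt 𝒦 L (birkhoffSum T f n) / n := by
  rw [div_eq_inv_mul, ← natExt_smul h𝒦g hasl (hf.birkhoffSum T n) (by positivity)]
  rfl

lemma bddAbove_natExt_birkhoffAverage (h𝒦g : ∀ f ∈ 𝒦, IsGamble f) (hasl : AvoidsSureLoss 𝒦 L)
    (hf : IsGamble f) :
    BddAbove (range fun n : ℕ => NatExt 𝒦 L (birkhoffAverage ℝ T f (n + 1))) := by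
  refine ⟨sSup (range f), ?_⟩
  rintro _ ⟨n, rfl⟩
  exact natExt_le_of_forall_le h𝒦g hasl (hf.birkhoffAverage T _)
    (hf.birkhoffAverage_le T n.succ_ne_zero)

lemma natExt_birkhoffAverage_le_invariantNatExt (h𝒦g : ∀ f ∈ 𝒦, IsGamble f)
    (hasl : AvoidsSureLoss 𝒦 L) (hf : IsGamble f) (n : ℕ) :
    NatExt 𝒦 L (birkhoffAverage ℝ T f (n + 1)) ≤ invariantNatExt 𝒦 L T f :=
  le_ciSup (bddAbove_natExt_birkhoffAverage h𝒦g hasl hf) n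

lemma natExt_le_invariantNatExt (h𝒦g : ∀ f ∈ 𝒦, IsGamble f) (hasl : AvoidsSureLoss 𝒦 L)
    (hf : IsGamble f) : NatExt 𝒦 L f ≤ invariantNatExt 𝒦 L T f := by
  simpa using natExt_birkhoffAverage_le_invariantNatExt (T := T) h𝒦g hasl hf 0

lemma tendsto_natExt_birkhoffAverage (h𝒦g : ∀ f ∈ 𝒦, IsGamble f) (hasl : AvoidsSureLoss 𝒦 L)
    (h𝒦T : ∀ f ∈ 𝒦, f ∘ T ∈ 𝒦) (hweak : ∀ f ∈ 𝒦, L f ≤ L (f ∘ T)) (hf : IsGamble f) :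
    Tendsto (fun n : ℕ => NatExt 𝒦 L (birkhoffAverage ℝ T f (n + 1))) atTop
      (𝓝 (invariantNatExt 𝒦 L T f)) := by
  have hbdd := bddAbove_natExt_birkhoffAverage (T := T) h𝒦g hasl hf
  simp only [invariantNatExt, natExt_birkhoffAverage h𝒦g hasl hf] at hbdd ⊢
  refine tendsto_ciSup_of_superadditive (u := fun m => NatExt 𝒦 L (birkhoffSum T f m))
    (fun m n => ?_) hbdd
  have hsplit : birkhoffSum T f (m + n) = birkhoffSum T f m + birkhoffSum T f n ∘ T^[m] :=
    funext (birkhoffSum_add T f m n)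
  rw [hsplit]
  exact (add_le_add le_rfl (natExt_le_natExt_comp_iterate h𝒦g hasl h𝒦T hweak
    (hf.birkhoffSum T n) m)).trans
    (le_natExt_add h𝒦g hasl (hf.birkhoffSum T m) ((hf.birkhoffSum T n).comp _))

lemma isCoherentLowerPrevision_invariantNatExt (h𝒦g : ∀ f ∈ 𝒦, IsGamble f)
    (hasl : AvoidsSureLoss 𝒦 L) (h𝒦T : ∀ f ∈ 𝒦, f ∘ T ∈ 𝒦)
    (hweak : ∀ f ∈ 𝒦, L f ≤ L (f ∘ T)) : IsCoherentLowerPrevision (invariantNatExt 𝒦 L T) := by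
  have htends := fun {f} (hf : IsGamble f) =>
    tendsto_natExt_birkhoffAverage h𝒦g hasl h𝒦T hweak hf
  refine ⟨fun f hf => ?_, fun f g hf hg => ?_, fun f hf c hc => ?_⟩
  · exact (le_natExt_of_forall_le h𝒦g hasl hf hf.sInf_le).trans
      (natExt_le_invariantNatExt h𝒦g hasl hf)
  · refine le_of_tendsto_of_tendsto' ((htends hf).add (htends hg)) (htends (hf.add hg))
      fun n => ?_
    rw [birkhoffAverage_add, Pi.add_apply]
    exact le_natExt_add h𝒦g hasl (hf.birkhoffAverage T _) (hg.birkhoffAverage T _)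
  · simp only [invariantNatExt, birkhoffAverage_smul,
      natExt_smul h𝒦g hasl (hf.birkhoffAverage T _) hc, Real.mul_iSup_of_nonneg hc]

lemma nonneg_invariantNatExt_of_le_birkhoffSum (h𝒦g : ∀ f ∈ 𝒦, IsGamble f)
    (hasl : AvoidsSureLoss 𝒦 L) (hf : IsGamble f) {C : ℝ}
    (hC : ∀ n x, C ≤ birkhoffSum T f n x) : 0 ≤ invariantNatExt 𝒦 L T f := by
  refine le_of_tendsto' ((tendsto_const_div_atTop_nhds_zero_nat C).comp
    (tendsto_add_atTop_nat 1)) fun n => ?_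
  refine le_trans ?_ (natExt_birkhoffAverage_le_invariantNatExt h𝒦g hasl hf n)
  refine le_natExt_of_forall_le h𝒦g hasl (hf.birkhoffAverage T _) fun x => ?_
  rw [birkhoffAverage, smul_eq_mul, inv_mul_eq_div]
  exact div_le_div_of_nonneg_right (hC _ x) (by positivity)

lemma isStronglyInvariant_invariantNatExt (h𝒦g : ∀ f ∈ 𝒦, IsGamble f)
    (hasl : AvoidsSureLoss 𝒦 L) : IsStronglyInvariant T (invariantNatExt 𝒦 L T) := by
  intro f hf
  constructor
  · refine nonneg_invariantNatExt_of_le_birkhoffSum h𝒦g hasl (hf.sub (hf.comp T))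
      (C := sInf (range f) - sSup (range f)) fun n x => ?_
    rw [birkhoffSum_sub_comp]
    linarith [hf.sInf_le x, hf.le_sSup (T^[n] x)]
  · refine nonneg_invariantNatExt_of_le_birkhoffSum h𝒦g hasl ((hf.comp T).sub hf)
      (C := sInf (range f) - sSup (range f)) fun n x => ?_
    rw [birkhoffSum_comp_sub]
    linarith [hf.le_sSup x, hf.sInf_le (T^[n] x)]

lemma IsCoherentLowerPrevision.invariantNatExt_le {M : (X → ℝ) → ℝ}
    (hM : IsCoherentLowerPrevision M) (hT : IsStronglyInvariant T M)
    (h𝒦g : ∀ f ∈ 𝒦, IsGamble f) (hdom : ∀ f ∈ 𝒦, L f ≤ M f) (hf : IsGamble f) :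
    invariantNatExt 𝒦 L T f ≤ M f :=
  ciSup_le fun n => (hM.natExt_le h𝒦g hdom (hf.birkhoffAverage T _)).trans
    (hM.map_birkhoffAverage_le hT hf n.succ_ne_zero)

end InvariantNaturalExtension

theorem stmt11 (X : Type*) [Nonempty X] (T : X → X)
    (𝒦 : Set (X → ℝ)) (h𝒦g : ∀ f ∈ 𝒦, IsGamble f)
    (h𝒦T : ∀ f ∈ 𝒦, f ∘ T ∈ 𝒦)
    (L : (X → ℝ) → ℝ) (hasl : AvoidsSureLoss 𝒦 L)
    (hweak : ∀ f ∈ 𝒦, L f ≤ L (f ∘ T)) :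
    ∃ M : (X → ℝ) → ℝ, IsCoherentLowerPrevision M ∧
      (∀ f : X → ℝ, IsGamble f → 0 ≤ M (f - f ∘ T) ∧ 0 ≤ M (f ∘ T - f)) ∧
      (∀ f ∈ 𝒦, L f ≤ M f) ∧
      (∀ M' : (X → ℝ) → ℝ, IsCoherentLowerPrevision M' →
        (∀ f : X → ℝ, IsGamble f → 0 ≤ M' (f - f ∘ T) ∧ 0 ≤ M' (f ∘ T - f)) →
        (∀ f ∈ 𝒦, L f ≤ M' f) →
        ∀ f : X → ℝ, IsGamble f → M f ≤ M' f) ∧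
      (∀ f : X → ℝ, IsGamble f →
        Filter.Tendsto (fun n : ℕ =>
            NatExt 𝒦 L (fun x =>
              (∑ k ∈ Finset.range (n+1), f (T^[k] x)) / ((n : ℝ) + 1)))
          Filter.atTop (nhds (M f)) ∧
        M f = ⨆ n : ℕ, NatExt 𝒦 L (fun x =>
              (∑ k ∈ Finset.range (n+1), f (T^[k] x)) / ((n : ℝ) + 1))) := by
  simp only [sum_range_succ_div_eq_birkhoffAverage]
  exact ⟨invariantNatExt 𝒦 L T, isCoherentLowerPrevision_invariantNatExt h𝒦g hasl h𝒦T hweak,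
    isStronglyInvariant_invariantNatExt h𝒦g hasl,
    fun f hf => (le_natExt_of_mem h𝒦g hasl hf).trans
      (natExt_le_invariantNatExt h𝒦g hasl (h𝒦g f hf)),
    fun M hM hT hdom f hf => hM.invariantNatExt_le hT h𝒦g hdom hf,
    fun f hf => ⟨tendsto_natExt_birkhoffAverage h𝒦g hasl h𝒦T hweak hf, rfl⟩⟩
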